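/- Suppose the two discrete states q_i and q_{i+1} are evaluations of the same stationary solution at the cell centers r_i and r_{i+1}, i.e. q_i = Q^E(r_i) and q_{i+1} = Q^E(r_{i+1}) (so u_i = u_{i+1} = 0 and all fluctuation quantities P^f, (rρ)^f, (ζ_r)^f vanish at both cells). Then f(q_{i+1}) − f(q_i) + B_{i+1/2}(q_{i+1} − q_i) = 0; indeed f(q_i) = f(q_{i+1}) = 0 and each of the components b₂, b₃, b₄ of B_{i+1/2}(q_{i+1}−q_i) is zero, for any choice of the interface values (rρ)^E_{i+1/2} and (ζ_r)_{i+1/2}. -/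
import Mathlib


/-! One-dimensional discretization of the cylindrical Euler system with
gravity, written with nonconservative products.  States are described by the
primitive variables `(r, ρ, u, v, E)`; the conserved vector is
`q = (rρ, rρu, rρv, rρE, r)`. -/

/-- Primitive state `(r, ρ, u, v, E)`. -/
structure Prim where
  r : ℝ
  ρ : ℝ
  u : ℝ
  v : ℝ
  E : ℝ

/-- Pressure `P = (γ-1)ρ(E - (u²+v²)/2)`. -/
noncomputable def pres (γ : ℝ) (a : Prim) : ℝ :=
  (γ - 1) * a.ρ * (a.E - (a.u ^ 2 + a.v ^ 2) / 2)

/-- Flux `f(q) = (rρu, rρu², rρuv, ru(ρE+P), 0)`. -/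
noncomputable def fvec (γ : ℝ) (a : Prim) : Fin 5 → ℝ :=
  ![a.r * a.ρ * a.u, a.r * a.ρ * a.u ^ 2, a.r * a.ρ * a.u * a.v,
    a.r * a.u * (a.ρ * a.E + pres γ a), 0]

/-- The state of the prescribed stationary solution at radius `r`
(zero radial velocity). -/
def eqPrim (ρE vE EE : ℝ → ℝ) (r : ℝ) : Prim :=
  ⟨r, ρE r, 0, vE r, EE r⟩

/-- Pressure fluctuation `P^f = P - P^E(r)` relative to the stationary
solution. -/
noncomputable def Pf (γ : ℝ) (ρE vE EE : ℝ → ℝ) (a : Prim) : ℝ :=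
  pres γ a - pres γ (eqPrim ρE vE EE a.r)

/-- Fluctuation `(rρ)^f = rρ - rρ^E(r)`. -/
def rρf (ρE : ℝ → ℝ) (a : Prim) : ℝ := a.r * a.ρ - a.r * ρE a.r

/-- `ζ_r = G mₛ/r² - v²/r`. -/
noncomputable def ζr (G ms : ℝ) (a : Prim) : ℝ :=
  G * ms / a.r ^ 2 - a.v ^ 2 / a.r

/-- Fluctuation `ζ_r^f = ((v^E)² - v²)/r`. -/
noncomputable def ζrf (vE : ℝ → ℝ) (a : Prim) : ℝ :=
  ((vE a.r) ^ 2 - a.v ^ 2) / a.r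

/-- Nonconservative jump term `B(q_b - q_a) = (0, b₂, b₃, b₄, 0)` between two
states, with arithmetic-mean interface values for the fluctuation quantities
and given (arbitrary) interface values `rρEh = (rρ)^E_{1/2}` and
`ζrh = (ζ_r)_{1/2}`. -/
noncomputable def Bjump (γ G ms : ℝ) (ρE vE EE : ℝ → ℝ) (rρEh ζrh : ℝ)
    (a b : Prim) : Fin 5 → ℝ :=
  ![0,
    ((a.r + b.r) / 2) * (Pf γ ρE vE EE b - Pf γ ρE vE EE a)
      + (rρEh * ((ζrf vE a + ζrf vE b) / 2)
          + ((rρf ρE a + rρf ρE b) / 2) * ζrh) * (b.r - a.r),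
    (((a.r * a.ρ * a.u + b.r * b.ρ * b.u) / 2) / ((a.r + b.r) / 2))
      * ((a.v + b.v) / 2) * (b.r - a.r),
    ((a.r * a.ρ * a.u + b.r * b.ρ * b.u) / 2)
      * (G * ms / ((a.r + b.r) / 2) ^ 2) * (b.r - a.r),
    0]

/-- if the two discrete states `q_i`, `q_{i+1}` are evaluations
of the same stationary solution at the cell centers `r_i`, `r_{i+1}`, then
`f(q_{i+1}) - f(q_i) + B_{i+1/2}(q_{i+1} - q_i) = 0`; indeed
`f(q_i) = f(q_{i+1}) = 0` and each of the components `b₂, b₃, b₄` vanishes,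
for ANY choice of the interface values `(rρ)^E_{i+1/2}` and `(ζ_r)_{i+1/2}`. -/
theorem flux_plus_jump_vanishes_on_equilibrium
    (γ G ms : ℝ) (hγ : 1 < γ)
    (ρE vE EE : ℝ → ℝ) (hρE : ∀ x : ℝ, 0 < ρE x)
    (ri rip : ℝ) (hri : 0 < ri) (hrip : 0 < rip) (hlt : ri < rip)
    (qi qip : Prim)
    (hqi : qi = eqPrim ρE vE EE ri) (hqip : qip = eqPrim ρE vE EE rip) :
    ∀ rρEh ζrh : ℝ,
      fvec γ qip - fvec γ qi + Bjump γ G ms ρE vE EE rρEh ζrh qi qip = 0 ∧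
      fvec γ qi = 0 ∧ fvec γ qip = 0 ∧
      Bjump γ G ms ρE vE EE rρEh ζrh qi qip 1 = 0 ∧
      Bjump γ G ms ρE vE EE rρEh ζrh qi qip 2 = 0 ∧
      Bjump γ G ms ρE vE EE rρEh ζrh qi qip 3 = 0 := by
  subst hqi hqip
  intro rρEh ζrh
  have hf : ∀ r : ℝ, fvec γ (eqPrim ρE vE EE r) = 0 := by
    intro r
    funext j
    fin_cases j <;> simp [fvec, eqPrim]
  have hPf : ∀ r : ℝ, Pf γ ρE vE EE (eqPrim ρE vE EE r) = 0 := by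
    intro r; simp [Pf, eqPrim]
  have hζrf : ∀ r : ℝ, ζrf vE (eqPrim ρE vE EE r) = 0 := by
    intro r; simp [ζrf, eqPrim]
  have hrρf : ∀ r : ℝ, rρf ρE (eqPrim ρE vE EE r) = 0 := by
    intro r; simp [rρf, eqPrim]
  have hB : ∀ j, Bjump γ G ms ρE vE EE rρEh ζrh (eqPrim ρE vE EE ri)
      (eqPrim ρE vE EE rip) j = 0 := by
    intro j
    fin_cases j <;>
      simp [Bjump, Pf, ζrf, rρf, pres, eqPrim]
  refine ⟨?_, hf ri, hf rip, hB 1, hB 2, hB 3⟩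
  funext j
  simp [hf, hB j]
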